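/- There exists a constant C > 0 such that for every s₁ ∈ [0,1] and s₂ ∈ [0,2/3] with s₁ + (3/2)s₂ ≤ 1, and every periodic function f: T² → ℝ with vanishing average in x₁: ‖|∂₁|^{s₁}|∂₂|^{s₂} f‖_{L²}² ≤ C H(f). -/

import Mathlib

open MeasureTheory Real
open scoped ENNReal

noncomputable section

namespace Ripple

/-- The fundamental domain of the torus `T² = [0,1)²` (up to a null set). -/
def Q : Set (ℝ × ℝ) := (Set.Ioc (0:ℝ) 1) ×ˢ (Set.Ioc (0:ℝ) 1)

/-- The torus measure: Lebesgue measure on `ℝ²` restricted to the fundamental domain. -/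
def μ : Measure (ℝ × ℝ) := volume.restrict Q

/-- The circle measure on `[0,1)`. -/
def ν : Measure ℝ := volume.restrict (Set.Ioc (0:ℝ) 1)

/-- Periodicity (with period 1) in both coordinates: the model for functions on `T²`. -/
def Per (f : ℝ × ℝ → ℝ) : Prop :=
  (∀ x : ℝ × ℝ, f (x.1 + 1, x.2) = f x) ∧ (∀ x : ℝ × ℝ, f (x.1, x.2 + 1) = f x)

/-- Vanishing average in the `x₁` variable. -/
def ZeroAvg1 (f : ℝ × ℝ → ℝ) : Prop :=
  ∀ x₂ : ℝ, (∫ x₁ in Set.Ioc (0:ℝ) 1, f (x₁, x₂)) = 0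

/-- Characters of the torus, indexed by `k ∈ (2πℤ)²` (written via `k ∈ ℤ²`). -/
def e (k : ℤ × ℤ) (x : ℝ × ℝ) : ℂ :=
  Complex.exp (2 * (π : ℂ) * Complex.I * (((k.1 : ℝ) * x.1 + (k.2 : ℝ) * x.2 : ℝ) : ℂ))

/-- Fourier coefficients of a (real-valued) function on the torus. -/
def fc (f : ℝ × ℝ → ℝ) (k : ℤ × ℤ) : ℂ :=
  ∫ x in Q, (starRingEnd ℂ) (e k x) * (f x : ℂ)

/-- Spectral square sums `Σₖ m(k) ‖c(k)‖²` of a coefficient sequence.  By Parseval,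
`specSumC m (fc f)` is the squared `L²` norm of the Fourier multiplier with symbol
`√(m k)` applied to `f`. -/
def specSumC (m : ℤ × ℤ → ℝ) (c : ℤ × ℤ → ℂ) : ℝ≥0∞ :=
  ∑' k : ℤ × ℤ, ENNReal.ofReal (m k * ‖c k‖ ^ 2)

def specSum (m : ℤ × ℤ → ℝ) (f : ℝ × ℝ → ℝ) : ℝ≥0∞ := specSumC m (fc f)

/-- Fourier coefficients of the Burgers nonlinearity `η_w = ∂₂ w − ∂₁ (w²/2)`. -/
def etaC (w : ℝ × ℝ → ℝ) (k : ℤ × ℤ) : ℂ :=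
  (2 * (π : ℂ) * (k.2 : ℂ)) * Complex.I * fc w k
    - (2 * (π : ℂ) * (k.1 : ℂ)) * Complex.I * fc (fun x => w x ^ 2 / 2) k

/-- The anharmonic energy `E(w) = ∫ (∂₁w)² + ∫ (|∂₁|^{-1/2} η_w)²`, written via Parseval. -/
def Ean (w : ℝ × ℝ → ℝ) : ℝ≥0∞ :=
  specSum (fun k => (2 * π * (k.1 : ℝ)) ^ 2) w
    + ∑' k : ℤ × ℤ, ENNReal.ofReal ((2 * π * |(k.1 : ℝ)|) ^ (-(1:ℝ)) * ‖etaC w k‖ ^ 2)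

/-- The harmonic energy `H(w) = ∫ (∂₁w)² + ∫ (|∂₁|^{-1/2} ∂₂ w)²`, written via Parseval. -/
def Harm (w : ℝ × ℝ → ℝ) : ℝ≥0∞ :=
  specSum (fun k => (2 * π * (k.1 : ℝ)) ^ 2) w
    + specSum (fun k => (2 * π * |(k.1 : ℝ)|) ^ (-(1:ℝ)) * (2 * π * (k.2 : ℝ)) ^ 2) w

/-- The squared anisotropic Sobolev norm `⦀f⦀_s² = ‖|∂₁|^s f‖² + ‖|∂₁|^{-s/2}|∂₂|^s f‖²`. -/
def HsN (s : ℝ) (f : ℝ × ℝ → ℝ) : ℝ≥0∞ :=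
  specSum (fun k => (2 * π * |(k.1 : ℝ)|) ^ (2 * s)) f
    + specSum (fun k => (2 * π * |(k.1 : ℝ)|) ^ (-s) * (2 * π * |(k.2 : ℝ)|) ^ (2 * s)) f

/-- The directional Besov seminorm `‖f‖_{Ḃ^s_{p;1}}` (differences in the `x₁` direction). -/
def besov1 (s p : ℝ) (f : ℝ × ℝ → ℝ) : ℝ≥0∞ :=
  ⨆ h ∈ Set.Ioc (0:ℝ) 1,
    ENNReal.ofReal (h ^ (-s)) *
      (∫⁻ x in Q, (ENNReal.ofReal |f (x.1 + h, x.2) - f x|) ^ p) ^ (1 / p)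

/-- The anisotropic (Carnot–Carathéodory) distance `d(x,y) = |y₁-x₁| + |y₂-x₂|^{2/3}`. -/
def dd (x y : ℝ × ℝ) : ℝ := |y.1 - x.1| + |y.2 - x.2| ^ ((2:ℝ)/3)

/-- Partial derivative in the `x₁` direction. -/
def pd1 (f : ℝ × ℝ → ℝ) (x : ℝ × ℝ) : ℝ := deriv (fun t => f (t, x.2)) x.1

/-- Positive anisotropic Hölder seminorm `[f]_α`, for `α ∈ (0, 3/2)`. -/
def posSemi (α : ℝ) (f : ℝ × ℝ → ℝ) : ℝ≥0∞ :=
  if α ≤ 1 then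
    ⨆ (x : ℝ × ℝ) (y : ℝ × ℝ) (_ : y ≠ x),
      ENNReal.ofReal (|f y - f x| / dd x y ^ α)
  else
    ⨆ (x : ℝ × ℝ) (y : ℝ × ℝ) (_ : y ≠ x),
      ENNReal.ofReal (|f y - f x - pd1 f x * (y.1 - x.1)| / dd x y ^ α)

/-- `F = c + ∂₁ g + ∂₂ h` on the level of Fourier coefficients. -/
def Decomp1 (F : ℤ × ℤ → ℂ) (a : ℝ) (g h : ℝ × ℝ → ℝ) : Prop :=
  ∀ k : ℤ × ℤ,
    F k = (if k = 0 then (a : ℂ) else 0)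
      + (2 * (π : ℂ) * (k.1 : ℂ)) * Complex.I * fc g k
      + (2 * (π : ℂ) * (k.2 : ℂ)) * Complex.I * fc h k

/-- `F = c + ∂₁² g + ∂₂ h` on the level of Fourier coefficients. -/
def Decomp2 (F : ℤ × ℤ → ℂ) (a : ℝ) (g h : ℝ × ℝ → ℝ) : Prop :=
  ∀ k : ℤ × ℤ,
    F k = (if k = 0 then (a : ℂ) else 0)
      + ((2 * (π : ℂ) * (k.1 : ℂ)) * Complex.I) ^ 2 * fc g k
      + (2 * (π : ℂ) * (k.2 : ℂ)) * Complex.I * fc h k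

/-- Negative anisotropic Hölder seminorm of a coefficient sequence, `β ∈ (−3/2, 0)`. -/
def negSemiC (β : ℝ) (F : ℤ × ℤ → ℂ) : ℝ≥0∞ :=
  if -1 < β then
    ⨅ (a : ℝ) (g : ℝ × ℝ → ℝ) (h : ℝ × ℝ → ℝ) (_ : Per g) (_ : Per h)
      (_ : Continuous g) (_ : Continuous h) (_ : Decomp1 F a g h),
      ENNReal.ofReal |a| + posSemi (β + 1) g + posSemi (β + 3/2) h
  else
    ⨅ (a : ℝ) (g : ℝ × ℝ → ℝ) (h : ℝ × ℝ → ℝ) (_ : Per g) (_ : Per h)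
      (_ : Continuous g) (_ : Continuous h) (_ : Decomp2 F a g h),
      ENNReal.ofReal |a| + posSemi (β + 2) g + posSemi (β + 3/2) h

/-- Anisotropic Hölder seminorm `[f]_α` of a function, `α ∈ (−3/2, 3/2) \ {0}`. -/
def semiF (α : ℝ) (f : ℝ × ℝ → ℝ) : ℝ≥0∞ :=
  if 0 < α then posSemi α f else negSemiC α (fc f)

/-- Function realization of a coefficient sequence (its Fourier series). -/
def realize (c : ℤ × ℤ → ℂ) (x : ℝ × ℝ) : ℝ := (∑' k : ℤ × ℤ, c k * e k x).re

/-- Anisotropic Hölder seminorm `[f]_α` of a periodic distribution given through its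
Fourier coefficients. -/
def semiD (α : ℝ) (c : ℤ × ℤ → ℂ) : ℝ≥0∞ :=
  if 0 < α then posSemi α (realize c) else negSemiC α c

/-- Reality condition for the coefficient sequence of a real-valued distribution. -/
def RealCoeffs (c : ℤ × ℤ → ℂ) : Prop := ∀ k : ℤ × ℤ, c (-k) = (starRingEnd ℂ) (c k)

/-- Realization of a Fourier multiplier with symbol `m` applied to a function `f`. -/
def applyM (m : ℤ × ℤ → ℂ) (f : ℝ × ℝ → ℝ) (x : ℝ × ℝ) : ℝ :=
  (∑' k : ℤ × ℤ, m k * fc f k * e k x).re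

/-- Symbol of the operator `𝒜 = |∂₁|³ − ∂₂²`. -/
def symA (k : ℤ × ℤ) : ℝ := (2 * π * |(k.1 : ℝ)|) ^ 3 + (2 * π * (k.2 : ℝ)) ^ 2

/-- The heat smoothing `f_T` of a distribution with coefficients `c`. -/
def heatReal (T : ℝ) (c : ℤ × ℤ → ℂ) (x : ℝ × ℝ) : ℝ :=
  (∑' k : ℤ × ℤ, c k * (Real.exp (-T * symA k) : ℂ) * e k x).re

/-- The function `T 𝒜 f_T` for a distribution with coefficients `c`. -/
def TAreal (T : ℝ) (c : ℤ × ℤ → ℂ) (x : ℝ × ℝ) : ℝ :=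
  (∑' k : ℤ × ℤ, c k * ((T * symA k * Real.exp (-T * symA k) : ℝ) : ℂ) * e k x).re

/-- Heat-kernel characterization of the anisotropic Hölder seminorm `[·]_α`:
`sup_{T ∈ (0,1]} (T^{1/3})^{-α} ‖T 𝒜 f_T‖_∞` for `α > 0`, and
`sup_{T ∈ (0,1]} (T^{1/3})^{-α} ‖f_T‖_∞` for `α < 0`. -/
def heatSemi (α : ℝ) (c : ℤ × ℤ → ℂ) : ℝ≥0∞ :=
  if 0 < α then
    ⨆ T ∈ Set.Ioc (0:ℝ) 1, ⨆ x : ℝ × ℝ,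
      ENNReal.ofReal ((T ^ ((1:ℝ)/3)) ^ (-α) * |TAreal T c x|)
  else
    ⨆ T ∈ Set.Ioc (0:ℝ) 1, ⨆ x : ℝ × ℝ,
      ENNReal.ofReal ((T ^ ((1:ℝ)/3)) ^ (-α) * |heatReal T c x|)

/-- The symbol `i · sgn(k₁)` of the Hilbert transform `R₁`. -/
def sgn1 (k : ℤ × ℤ) : ℂ :=
  if 0 < k.1 then Complex.I else if k.1 < 0 then -Complex.I else 0

/-- The real pairing `Σₖ conj (a k) * (b k)`; by Parseval this is `∫ A B dx`
for real functions/distributions `A, B` with Fourier coefficients `a, b`. -/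
def pairR (a b : ℤ × ℤ → ℂ) : ℝ := (∑' k : ℤ × ℤ, (starRingEnd ℂ) (a k) * b k).re

/-- Spectral formulation of the linearized equation `L v = P ξ`,
`L = −∂₁² − |∂₁|^{-1} ∂₂²`, together with the vanishing average of `v` in `x₁`. -/
def LvEqPxi (xic : ℤ × ℤ → ℂ) (v : ℝ × ℝ → ℝ) : Prop :=
  ∀ k : ℤ × ℤ,
    (k.1 = 0 → fc v k = 0) ∧
    (k.1 ≠ 0 →
      ((((2 * π * (k.1 : ℝ)) ^ 2 + (2 * π * |(k.1 : ℝ)|)⁻¹ * (2 * π * (k.2 : ℝ)) ^ 2 : ℝ)) : ℂ)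
        * fc v k = xic k)

/-- The remainder functional
`𝒢(v,F;w) = ∫ (w² R₁∂₂v + v² R₁η_w + 2vw R₁η_w + 2wF − wvR₁∂₁v² + (R₁|∂₁|^{1/2}(vw))²) dx`,
written rigorously via Parseval as
`−2∫ w ∂₁w (|∂₁|^{-1}∂₂v) + ∫ (|∂₁|^{1/2}v²)(R₁|∂₁|^{-1/2}η_w)
 + 2∫ (|∂₁|^{1/2}(vw))(R₁|∂₁|^{-1/2}η_w) + 2⟨F,w⟩ − ⟨R₁∂₁v², vw⟩ + ∫ (R₁|∂₁|^{1/2}(vw))²`. -/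
def Gfun (v : ℝ × ℝ → ℝ) (Fc : ℤ × ℤ → ℂ) (w : ℝ × ℝ → ℝ) : ℝ :=
  (- pairR (fun k => (2 * (π : ℂ) * (k.1 : ℂ)) * Complex.I * fc (fun x => w x ^ 2) k)
      (fun k => (((2 * π * |(k.1 : ℝ)|) ^ (-(1:ℝ)) : ℝ) : ℂ)
        * ((2 * (π : ℂ) * (k.2 : ℂ)) * Complex.I) * fc v k))
  + pairR (fun k => (((2 * π * |(k.1 : ℝ)|) ^ ((1:ℝ)/2) : ℝ) : ℂ) * fc (fun x => v x ^ 2) k)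
      (fun k => sgn1 k * (((2 * π * |(k.1 : ℝ)|) ^ (-(1:ℝ)/2) : ℝ) : ℂ) * etaC w k)
  + 2 * pairR (fun k => (((2 * π * |(k.1 : ℝ)|) ^ ((1:ℝ)/2) : ℝ) : ℂ) * fc (fun x => v x * w x) k)
      (fun k => sgn1 k * (((2 * π * |(k.1 : ℝ)|) ^ (-(1:ℝ)/2) : ℝ) : ℂ) * etaC w k)
  + 2 * pairR (fc w) Fc
  - pairR (fc (fun x => v x * w x))
      (fun k => sgn1 k * ((2 * (π : ℂ) * (k.1 : ℂ)) * Complex.I) * fc (fun x => v x ^ 2) k)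
  + pairR (fun k => sgn1 k * (((2 * π * |(k.1 : ℝ)|) ^ ((1:ℝ)/2) : ℝ) : ℂ) * fc (fun x => v x * w x) k)
      (fun k => sgn1 k * (((2 * π * |(k.1 : ℝ)|) ^ ((1:ℝ)/2) : ℝ) : ℂ) * fc (fun x => v x * w x) k)

/-- The renormalized energy `E_ren(v,F;w) = E(w) + 𝒢(v,F;w)`, extended by `+∞`
to those `w` with `E(w) = ∞`. -/
def Eren (v : ℝ × ℝ → ℝ) (Fc : ℤ × ℤ → ℂ) (w : ℝ × ℝ → ℝ) : EReal :=
  if Ean w < ⊤ then (((Ean w).toReal + Gfun v Fc w : ℝ) : EReal) else (⊤ : EReal)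

instance : Fact ((1:ℝ≥0∞) ≤ 2) := ⟨one_le_two⟩

/-!
Mode by mode: the vanishing `x₁`-average kills the modes `k₁ = 0`, and on `|k₁| ≥ 1` the symbol
of `|∂₁|^{s₁}|∂₂|^{s₂}` factors as `(k₁²)^{s₁ + s₂/2} (|k₁|⁻¹ k₂²)^{s₂}`, a product of powers of
the two symbols of the harmonic energy with total exponent `s₁ + (3/2) s₂ ≤ 1`; as their sum is
at least `1`, it is bounded by that sum.
-/

instance : SFinite ν := by unfold ν; infer_instance

lemma μ_eq_prod : μ = ν.prod ν := by
  rw [μ, ν, Q, Measure.prod_restrict, ← Measure.volume_eq_prod]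

lemma continuous_e (k : ℤ × ℤ) : Continuous (e k) := by
  unfold e; fun_prop

lemma norm_e (k : ℤ × ℤ) (x : ℝ × ℝ) : ‖e k x‖ = 1 := by
  rw [e, Complex.norm_exp]
  simp [Complex.mul_re]

lemma e_eq_of_fst_eq_zero {k : ℤ × ℤ} (hk : k.1 = 0) (x : ℝ × ℝ) : e k x = e k (0, x.2) := by
  simp [e, hk]

lemma fc_eq_zero_of_zeroAvg1 {f : ℝ × ℝ → ℝ} (hf : Integrable f μ) (hZ : ZeroAvg1 f)
    {k : ℤ × ℤ} (hk : k.1 = 0) : fc f k = 0 := by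
  have hint : Integrable (fun x => starRingEnd ℂ (e k x) * (f x : ℂ)) (ν.prod ν) := by
    rw [← μ_eq_prod]
    refine hf.ofReal.bdd_mul (c := 1)
      (Complex.continuous_conj.comp (continuous_e k)).aestronglyMeasurable
      (Filter.Eventually.of_forall fun x => ?_)
    simp [norm_e]
  have hinner (x₂ : ℝ) : ∫ x₁, starRingEnd ℂ (e k (x₁, x₂)) * (f (x₁, x₂) : ℂ) ∂ν = 0 := by
    calc ∫ x₁, starRingEnd ℂ (e k (x₁, x₂)) * (f (x₁, x₂) : ℂ) ∂ν
        = starRingEnd ℂ (e k (0, x₂)) * ((∫ x₁, f (x₁, x₂) ∂ν : ℝ) : ℂ) := by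
          rw [← integral_complex_ofReal, ← integral_const_mul]
          simp only [e_eq_of_fst_eq_zero hk (_, x₂)]
      _ = 0 := by rw [show (∫ x₁, f (x₁, x₂) ∂ν) = 0 from hZ x₂]; simp
  change ∫ x, starRingEnd ℂ (e k x) * (f x : ℂ) ∂μ = 0
  rw [μ_eq_prod, integral_prod_symm _ hint]
  simp [hinner]

lemma rpow_mul_rpow_le_add {X Y θ φ : ℝ} (hX : 0 ≤ X) (hY : 0 ≤ Y) (hXY : 1 ≤ X + Y)
    (hθ : 0 ≤ θ) (hφ : 0 ≤ φ) (hθφ : θ + φ ≤ 1) : X ^ θ * Y ^ φ ≤ X + Y :=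
  calc X ^ θ * Y ^ φ ≤ (X + Y) ^ θ * (X + Y) ^ φ := by
        gcongr
        · linarith
        · linarith
    _ = (X + Y) ^ (θ + φ) := (rpow_add (by linarith) θ φ).symm
    _ ≤ (X + Y) ^ (1 : ℝ) := rpow_le_rpow_of_exponent_le hXY hθφ
    _ = X + Y := rpow_one _

lemma rpow_mul_rpow_le_sq_add_inv_mul_sq {a b s₁ s₂ : ℝ} (ha : 1 ≤ a) (hb : 0 ≤ b)
    (hs₁ : 0 ≤ s₁) (hs₂ : 0 ≤ s₂) (hs : s₁ + (3/2) * s₂ ≤ 1) :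
    a ^ (2 * s₁) * b ^ (2 * s₂) ≤ a ^ 2 + a ^ (-(1:ℝ)) * b ^ 2 := by
  have ha₀ : 0 ≤ a := by linarith
  have hfactor : a ^ (2 * s₁) * b ^ (2 * s₂)
      = (a ^ 2) ^ (s₁ + s₂ / 2) * (a ^ (-(1:ℝ)) * b ^ 2) ^ s₂ := by
    rw [mul_rpow (rpow_nonneg ha₀ _) (by positivity), ← rpow_natCast a 2, ← rpow_natCast b 2,
      ← rpow_mul ha₀, ← rpow_mul ha₀, ← rpow_mul hb, ← mul_assoc,
      ← rpow_add (by linarith)]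
    ring_nf
  rw [hfactor]
  exact rpow_mul_rpow_le_add (by positivity) (by positivity)
    (le_add_of_le_of_nonneg (one_le_pow₀ ha) (by positivity)) (by positivity) hs₂ (by linarith)

lemma specSumC_add {m m' : ℤ × ℤ → ℝ} (hm : ∀ k, 0 ≤ m k) (hm' : ∀ k, 0 ≤ m' k)
    (c : ℤ × ℤ → ℂ) : specSumC (m + m') c = specSumC m c + specSumC m' c := by
  rw [specSumC, specSumC, specSumC, ← ENNReal.tsum_add]
  congr 1 with k
  rw [Pi.add_apply, add_mul,
    ENNReal.ofReal_add (mul_nonneg (hm k) (sq_nonneg _)) (mul_nonneg (hm' k) (sq_nonneg _))]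

lemma specSumC_le_specSumC {m m' : ℤ × ℤ → ℝ} {c : ℤ × ℤ → ℂ}
    (h : ∀ k, c k ≠ 0 → m k ≤ m' k) : specSumC m c ≤ specSumC m' c := by
  refine ENNReal.tsum_le_tsum fun k => ?_
  by_cases hk : c k = 0
  · simp [hk]
  · exact ENNReal.ofReal_le_ofReal (mul_le_mul_of_nonneg_right (h k hk) (by positivity))

/-- there is `C > 0` with `‖|∂₁|^{s₁}|∂₂|^{s₂} f‖_{L²}² ≤ C H(f)` for all
`s₁ ∈ [0,1]`, `s₂ ∈ [0,2/3]` with `s₁ + (3/2)s₂ ≤ 1`, and every periodic `f` with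
vanishing average in `x₁` (the squared norm written spectrally via Parseval). -/
theorem mixed_derivative_by_harmonic :
    ∃ C : ℝ, 0 < C ∧
      ∀ s₁ s₂ : ℝ, s₁ ∈ Set.Icc (0:ℝ) 1 → s₂ ∈ Set.Icc (0:ℝ) (2/3) →
        s₁ + (3/2) * s₂ ≤ 1 →
      ∀ f : ℝ × ℝ → ℝ, Per f → MemLp f 1 μ → ZeroAvg1 f →
        specSum (fun k => (2*π*|(k.1:ℝ)|) ^ (2*s₁) * (2*π*|(k.2:ℝ)|) ^ (2*s₂)) f
          ≤ ENNReal.ofReal C * Harm f := by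
  refine ⟨1, one_pos, fun s₁ s₂ hs₁ hs₂ hs f _ hf hZ => ?_⟩
  rw [ENNReal.ofReal_one, one_mul, Harm, specSum, specSum, specSum,
    ← specSumC_add (fun _ => by positivity) (fun _ => by positivity)]
  refine specSumC_le_specSumC fun k hk => ?_
  have hk₁ : k.1 ≠ 0 := fun h => hk (fc_eq_zero_of_zeroAvg1 (memLp_one_iff_integrable.mp hf) hZ h)
  have ha : 1 ≤ 2 * π * |(k.1 : ℝ)| := by
    have : (1 : ℝ) ≤ |(k.1 : ℝ)| := by exact_mod_cast Int.one_le_abs hk₁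
    nlinarith [pi_gt_three]
  simpa [← sq_abs (2 * π * (k.1 : ℝ)), ← sq_abs (2 * π * (k.2 : ℝ)), abs_mul, abs_of_pos pi_pos]
    using rpow_mul_rpow_le_sq_add_inv_mul_sq ha (by positivity) hs₁.1 hs₂.1 hs

end Ripple

end
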